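/- For t ∈ (0,1), let E(r) = 1 + r + ((1+t)(1−r²) − (r−t))/(1−tr) for r ∈ [0,1). Then E attains its maximum on [0,1) at r₀ = (1−√(1−t²))/t, the maximum value is N_t = (2 − 2√(1−t²) + t(4 + t − 4√(1−t²)))/t², and N_t → 7 as t → 1⁻. -/

import Mathlib

open Set Filter

/-- `E(r) = 1 + r + ((1+t)(1−r²) − (r−t))/(1−tr)`. -/
noncomputable def Efun (t r : ℝ) : ℝ := 1 + r + ((1 + t) * (1 - r ^ 2) - (r - t)) / (1 - t * r)

/-- `r₀ = (1 − √(1−t²))/t`. -/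
noncomputable def rzero (t : ℝ) : ℝ := (1 - Real.sqrt (1 - t ^ 2)) / t

/-- `N_t = (2 − 2√(1−t²) + t(4 + t − 4√(1−t²)))/t²`. -/
noncomputable def Nt (t : ℝ) : ℝ :=
  (2 - 2 * Real.sqrt (1 - t ^ 2) + t * (4 + t - 4 * Real.sqrt (1 - t ^ 2))) / t ^ 2

/-!
Clearing the denominator, `E(r₀) - E(r) = (1 + 2t)(r - r₀)² / (1 - tr)`, because `r₀` is the root
in `(0, 1)` of `t r² - 2 r + t`, the numerator of `E'`; this is nonnegative on `[0, 1)`. At `r₀` the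
denominator is `1 - t r₀ = √(1 - t²)`, which gives the closed form `N_t`, continuous at `t = 1`.
-/

lemma one_sub_mul_rzero {t : ℝ} (ht : t ≠ 0) : 1 - t * rzero t = Real.sqrt (1 - t ^ 2) := by
  rw [rzero]
  field_simp
  ring

lemma rzero_mem_Ico {t : ℝ} (ht : t ∈ Ioo (0 : ℝ) 1) : rzero t ∈ Ico (0 : ℝ) 1 := by
  obtain ⟨ht0, ht1⟩ := ht
  have hsqrt : 1 - t < Real.sqrt (1 - t ^ 2) :=
    Real.lt_sqrt_of_sq_lt (by nlinarith)
  refine ⟨div_nonneg ?_ ht0.le, (div_lt_one ht0).2 (by linarith)⟩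
  linarith [Real.sqrt_le_one.2 (by nlinarith : 1 - t ^ 2 ≤ 1)]

lemma Efun_rzero_sub_Efun {t r : ℝ} (ht : t ≠ 0) (ht1 : t ^ 2 < 1) (htr : t * r ≠ 1) :
    Efun t (rzero t) - Efun t r = (1 + 2 * t) * (r - rzero t) ^ 2 / (1 - t * r) := by
  have hs2 : Real.sqrt (1 - t ^ 2) ^ 2 = 1 - t ^ 2 := Real.sq_sqrt (by linarith)
  have hs0 : Real.sqrt (1 - t ^ 2) ≠ 0 := (Real.sqrt_pos.2 (by linarith)).ne'
  have htr' : 1 - t * r ≠ 0 := sub_ne_zero.2 htr.symm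
  rw [Efun, Efun, one_sub_mul_rzero ht, rzero]
  field_simp
  linear_combination (-(1 + 2 * t) * Real.sqrt (1 - t ^ 2) + 1 + 2 * t - t * r - 2 * t ^ 2 * r) * hs2

lemma Efun_le_Efun_rzero {t r : ℝ} (ht : t ∈ Ioo (0 : ℝ) 1) (hr : r ∈ Ico (0 : ℝ) 1) :
    Efun t r ≤ Efun t (rzero t) := by
  obtain ⟨ht0, ht1⟩ := ht
  obtain ⟨hr0, hr1⟩ := hr
  have htr : t * r < 1 := by nlinarith
  have hdiff := Efun_rzero_sub_Efun ht0.ne' (by nlinarith) htr.ne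
  have hden : 0 < 1 - t * r := by linarith
  have hnonneg : 0 ≤ (1 + 2 * t) * (r - rzero t) ^ 2 / (1 - t * r) := by positivity
  linarith

lemma Efun_rzero {t : ℝ} (ht : t ≠ 0) (ht1 : t ^ 2 < 1) : Efun t (rzero t) = Nt t := by
  have hs2 : Real.sqrt (1 - t ^ 2) ^ 2 = 1 - t ^ 2 := Real.sq_sqrt (by linarith)
  have hs0 : Real.sqrt (1 - t ^ 2) ≠ 0 := (Real.sqrt_pos.2 (by linarith)).ne'
  rw [Efun, one_sub_mul_rzero ht, rzero, Nt]
  field_simp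
  linear_combination (1 + 2 * t) * hs2

lemma tendsto_Nt_nhdsLT_one : Tendsto Nt (nhdsWithin 1 (Iio 1)) (nhds 7) := by
  have hcont : ContinuousAt Nt 1 := by
    unfold Nt
    exact ContinuousAt.div (by fun_prop) (by fun_prop) (by norm_num)
  have hNt : Nt 1 = 7 := by norm_num [Nt]
  exact hNt ▸ hcont.tendsto.mono_left nhdsWithin_le_nhds

/-- For `t ∈ (0,1)`, `E` attains its maximum on `[0,1)` at `r₀ = (1−√(1−t²))/t`, the
maximum value is `N_t`, and `N_t → 7` as `t → 1⁻`. -/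
theorem Efun_max_and_limit :
    (∀ t ∈ Set.Ioo (0 : ℝ) 1,
        rzero t ∈ Set.Ico (0 : ℝ) 1 ∧
        (∀ r ∈ Set.Ico (0 : ℝ) 1, Efun t r ≤ Efun t (rzero t)) ∧
        Efun t (rzero t) = Nt t) ∧
      Tendsto Nt (nhdsWithin 1 (Set.Iio 1)) (nhds 7) := by
  refine ⟨fun t ht => ⟨rzero_mem_Ico ht, fun r hr => Efun_le_Efun_rzero ht hr, ?_⟩,
    tendsto_Nt_nhdsLT_one⟩
  exact Efun_rzero ht.1.ne' (by nlinarith [ht.1, ht.2])
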